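/- arXiv:2507.07837 — 4 statements merged into one kernel-verified Lean document; each statement's English description precedes it below -/
import Mathlib

section
/- Let λ, μ, ρ > 0, ω > 0, and β ∈ ℝ with β² > ρω²/μ. Set γ_s := √(β² − ρω²/μ), γ_p := √(β² − ρω²/(λ+2μ)), and K := (λ+μ)/(4πμ(λ+2μ)(γ_p² − γ_s²)). Define c₁(x) := K·( γ_s·e^{−γ_s|x|} − (β²/γ_p)·e^{−γ_p|x|} ) and c₂(x) := i K β·sgn(x)·( e^{−γ_s|x|} − e^{−γ_p|x|} ). Then for every x ∈ ℝ with x ≠ 0: (ρω² − (λ+2μ)β²)·c₁(x) + μ·c₁''(x) + i(λ+μ)β·c₂'(x) = 0 and (ρω² − μβ²)·c₂(x) + (λ+2μ)·c₂''(x) + i(λ+μ)β·c₁'(x) = 0. -/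
private lemma hE' (c : ℝ) (x : ℝ) :
    HasDerivAt (fun t : ℝ => Complex.exp ((c : ℂ) * t)) ((c : ℂ) * Complex.exp ((c : ℂ) * x)) x := by
  have h1 : HasDerivAt (fun t : ℝ => ((c : ℂ) * t)) (c : ℂ) x := by
    simpa using (Complex.ofRealCLM.hasDerivAt (x := x)).const_mul (c : ℂ)
  simpa [mul_comm] using h1.cexp

private lemma key_lemma (lam mu rho omega β γs γp K B ε : ℝ)
    (hε : ε ^ 2 = 1)
    (hr1 : mu * γs ^ 2 = mu * β ^ 2 - rho * omega ^ 2)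
    (hr2 : (lam + 2 * mu) * γp ^ 2 = (lam + 2 * mu) * β ^ 2 - rho * omega ^ 2)
    (hB : γp * B = β ^ 2)
    (c1 c2 : ℝ → ℂ) (s : Set ℝ) (hso : IsOpen s) (x : ℝ) (hxs : x ∈ s)
    (h1 : ∀ y ∈ s, c1 y =
      (K : ℂ) * ((γs : ℂ) * Complex.exp (((ε * γs : ℝ) : ℂ) * y) -
        (B : ℂ) * Complex.exp (((ε * γp : ℝ) : ℂ) * y)))
    (h2 : ∀ y ∈ s, c2 y =
      -(ε : ℂ) * Complex.I * (K : ℂ) * (β : ℂ) *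
        (Complex.exp (((ε * γs : ℝ) : ℂ) * y) - Complex.exp (((ε * γp : ℝ) : ℂ) * y))) :
    ((rho * omega ^ 2 - (lam + 2 * mu) * β ^ 2 : ℝ) : ℂ) * c1 x +
        (mu : ℂ) * deriv (deriv c1) x +
        Complex.I * (lam + mu) * β * deriv c2 x = 0 ∧
    ((rho * omega ^ 2 - mu * β ^ 2 : ℝ) : ℂ) * c2 x +
        ((lam + 2 * mu : ℝ) : ℂ) * deriv (deriv c2) x +
        Complex.I * (lam + mu) * β * deriv c1 x = 0 := by
  set a : ℝ := ε * γs with ha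
  set b : ℝ := ε * γp with hb
  set F1 : ℝ → ℂ := fun y => (K : ℂ) * ((γs : ℂ) * Complex.exp ((a : ℂ) * y) -
      (B : ℂ) * Complex.exp ((b : ℂ) * y)) with hF1def
  set G1 : ℝ → ℂ := fun y => (K : ℂ) * ((γs : ℂ) * ((a : ℂ) * Complex.exp ((a : ℂ) * y)) -
      (B : ℂ) * ((b : ℂ) * Complex.exp ((b : ℂ) * y))) with hG1def
  set H1 : ℝ → ℂ := fun y => (K : ℂ) * ((γs : ℂ) * ((a : ℂ) * ((a : ℂ) * Complex.exp ((a : ℂ) * y))) -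
      (B : ℂ) * ((b : ℂ) * ((b : ℂ) * Complex.exp ((b : ℂ) * y)))) with hH1def
  set C2 : ℂ := -(ε : ℂ) * Complex.I * (K : ℂ) * (β : ℂ) with hC2def
  set F2 : ℝ → ℂ := fun y => C2 * (Complex.exp ((a : ℂ) * y) - Complex.exp ((b : ℂ) * y)) with hF2def
  set G2 : ℝ → ℂ := fun y => C2 * ((a : ℂ) * Complex.exp ((a : ℂ) * y) -
      (b : ℂ) * Complex.exp ((b : ℂ) * y)) with hG2def
  set H2 : ℝ → ℂ := fun y => C2 * ((a : ℂ) * ((a : ℂ) * Complex.exp ((a : ℂ) * y)) -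
      (b : ℂ) * ((b : ℂ) * Complex.exp ((b : ℂ) * y))) with hH2def
  have hF1 : ∀ y : ℝ, HasDerivAt F1 (G1 y) y := fun y =>
    (((hE' a y).const_mul (γs : ℂ)).sub ((hE' b y).const_mul (B : ℂ))).const_mul (K : ℂ)
  have hG1 : ∀ y : ℝ, HasDerivAt G1 (H1 y) y := fun y =>
    ((((hE' a y).const_mul (a : ℂ)).const_mul (γs : ℂ)).sub
      (((hE' b y).const_mul (b : ℂ)).const_mul (B : ℂ))).const_mul (K : ℂ)
  have hF2 : ∀ y : ℝ, HasDerivAt F2 (G2 y) y := fun y =>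
    ((hE' a y).sub (hE' b y)).const_mul C2
  have hG2 : ∀ y : ℝ, HasDerivAt G2 (H2 y) y := fun y =>
    (((hE' a y).const_mul (a : ℂ)).sub ((hE' b y).const_mul (b : ℂ))).const_mul C2
  have hm1 : ∀ y ∈ s, c1 y = F1 y := h1
  have hm2 : ∀ y ∈ s, c2 y = F2 y := h2
  have hd1 : ∀ y ∈ s, deriv c1 y = G1 y := by
    intro y hy
    have heq : c1 =ᶠ[nhds y] F1 := Filter.eventuallyEq_of_mem (hso.mem_nhds hy) hm1
    rw [heq.deriv_eq, (hF1 y).deriv]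
  have hd2 : ∀ y ∈ s, deriv c2 y = G2 y := by
    intro y hy
    have heq : c2 =ᶠ[nhds y] F2 := Filter.eventuallyEq_of_mem (hso.mem_nhds hy) hm2
    rw [heq.deriv_eq, (hF2 y).deriv]
  have hdd1 : deriv (deriv c1) x = H1 x := by
    have heq : deriv c1 =ᶠ[nhds x] G1 := Filter.eventuallyEq_of_mem (hso.mem_nhds hxs) hd1
    rw [heq.deriv_eq, (hG1 x).deriv]
  have hdd2 : deriv (deriv c2) x = H2 x := by
    have heq : deriv c2 =ᶠ[nhds x] G2 := Filter.eventuallyEq_of_mem (hso.mem_nhds hxs) hd2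
    rw [heq.deriv_eq, (hG2 x).deriv]
  rw [hm1 x hxs, hm2 x hxs, hd1 x hxs, hd2 x hxs, hdd1, hdd2,
    hF1def, hG1def, hH1def, hF2def, hG2def, hH2def, hC2def]
  obtain ⟨e1, he1⟩ : ∃ z, Complex.exp ((a : ℂ) * (x : ℂ)) = z := ⟨_, rfl⟩
  obtain ⟨e2, he2⟩ : ∃ z, Complex.exp ((b : ℂ) * (x : ℂ)) = z := ⟨_, rfl⟩
  simp only [he1, he2]
  have haC : (a : ℂ) = (ε : ℂ) * (γs : ℂ) := by rw [ha]; push_cast; ring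
  have hbC : (b : ℂ) = (ε : ℂ) * (γp : ℂ) := by rw [hb]; push_cast; ring
  rw [haC, hbC]
  have H1C : (mu : ℂ) * (γs : ℂ) ^ 2 = (mu : ℂ) * (β : ℂ) ^ 2 - (rho : ℂ) * (omega : ℂ) ^ 2 := by
    exact_mod_cast hr1
  have H2C : ((lam : ℂ) + 2 * mu) * (γp : ℂ) ^ 2 =
      ((lam : ℂ) + 2 * mu) * (β : ℂ) ^ 2 - (rho : ℂ) * (omega : ℂ) ^ 2 := by exact_mod_cast hr2
  have hεC : (ε : ℂ) ^ 2 = 1 := by exact_mod_cast hε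
  have hBC : (γp : ℂ) * (B : ℂ) = (β : ℂ) ^ 2 := by exact_mod_cast hB
  constructor
  · push_cast
    linear_combination ((K : ℂ) * γs * e1) * H1C + (-((K : ℂ) * B * e2)) * H2C +
      ((mu : ℂ) * K * ((γs : ℂ) ^ 3 * e1 - (B : ℂ) * (γp : ℂ) ^ 2 * e2) +
        ((lam : ℂ) + mu) * K * (β : ℂ) ^ 2 * ((γs : ℂ) * e1 - (γp : ℂ) * e2)) * hεC +
      ((K : ℂ) * ((lam : ℂ) + mu) * (γp : ℂ) * e2) * hBC +
      (-(ε : ℂ) ^ 2 * ((lam : ℂ) + mu) * K * (β : ℂ) ^ 2 * ((γs : ℂ) * e1 - (γp : ℂ) * e2)) *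
        Complex.I_sq
  · push_cast
    linear_combination (-(ε : ℂ) * Complex.I * K * β * e1) * H1C +
      ((ε : ℂ) * Complex.I * K * β * e2) * H2C +
      (-(ε : ℂ) * Complex.I * K * β * ((lam : ℂ) + 2 * mu) *
        ((γs : ℂ) ^ 2 * e1 - (γp : ℂ) ^ 2 * e2)) * hεC +
      (-Complex.I * (ε : ℂ) * ((lam : ℂ) + mu) * K * β * e2) * hBC

/-- Case I (evanescent regime) solution of the coupled ODE system satisfied by
the Fourier coefficients `(c_{l,11}, c_{l,21})` of the quasi-periodic Green's
function of the Lamé system, for `β² > ρω²/μ`. -/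
theorem stmt10 (lam mu rho omega β : ℝ)
    (hlam : 0 < lam) (hmu : 0 < mu) (hrho : 0 < rho) (homega : 0 < omega)
    (hβ : rho * omega ^ 2 / mu < β ^ 2)
    (γs γp K : ℝ)
    (hγs : γs = Real.sqrt (β ^ 2 - rho * omega ^ 2 / mu))
    (hγp : γp = Real.sqrt (β ^ 2 - rho * omega ^ 2 / (lam + 2 * mu)))
    (hK : K = (lam + mu) / (4 * Real.pi * mu * (lam + 2 * mu) * (γp ^ 2 - γs ^ 2)))
    (c1 c2 : ℝ → ℂ)
    (hc1 : ∀ x : ℝ, c1 x =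
      (K : ℂ) * ((γs : ℂ) * Real.exp (-(γs * |x|)) -
        ((β ^ 2 / γp : ℝ) : ℂ) * Real.exp (-(γp * |x|))))
    (hc2 : ∀ x : ℝ, c2 x =
      Complex.I * K * β * (Real.sign x : ℝ) *
        ((Real.exp (-(γs * |x|)) : ℝ) - (Real.exp (-(γp * |x|)) : ℝ))) :
    ∀ x : ℝ, x ≠ 0 →
      ((rho * omega ^ 2 - (lam + 2 * mu) * β ^ 2 : ℝ) : ℂ) * c1 x +
          (mu : ℂ) * deriv (deriv c1) x +
          Complex.I * (lam + mu) * β * deriv c2 x = 0 ∧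
      ((rho * omega ^ 2 - mu * β ^ 2 : ℝ) : ℂ) * c2 x +
          ((lam + 2 * mu : ℝ) : ℂ) * deriv (deriv c2) x +
          Complex.I * (lam + mu) * β * deriv c1 x = 0 := by
  have hro : 0 < rho * omega ^ 2 := by positivity
  have hlm : 0 < lam + 2 * mu := by linarith
  have hdiv : rho * omega ^ 2 / (lam + 2 * mu) < rho * omega ^ 2 / mu :=
    div_lt_div_of_pos_left hro hmu (by linarith)
  have hγs2 : γs ^ 2 = β ^ 2 - rho * omega ^ 2 / mu := by
    rw [hγs]; exact Real.sq_sqrt (by linarith)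
  have hγp2 : γp ^ 2 = β ^ 2 - rho * omega ^ 2 / (lam + 2 * mu) := by
    rw [hγp]; exact Real.sq_sqrt (by linarith)
  have hr1 : mu * γs ^ 2 = mu * β ^ 2 - rho * omega ^ 2 := by
    rw [hγs2]; field_simp
  have hr2 : (lam + 2 * mu) * γp ^ 2 = (lam + 2 * mu) * β ^ 2 - rho * omega ^ 2 := by
    rw [hγp2]; field_simp
  have hγppos : 0 < γp := by
    rw [hγp]; exact Real.sqrt_pos.mpr (by linarith)
  have hB : γp * (β ^ 2 / γp) = β ^ 2 := by field_simp
  intro x hx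
  rcases hx.lt_or_gt with hneg | hpos
  · refine key_lemma lam mu rho omega β γs γp K (β ^ 2 / γp) 1 (by norm_num) hr1 hr2 hB
      c1 c2 (Set.Iio 0) isOpen_Iio x hneg ?_ ?_
    · intro y hy
      rw [hc1 y, abs_of_neg hy]
      push_cast
      ring_nf
    · intro y hy
      rw [hc2 y, abs_of_neg hy, Real.sign_of_neg hy]
      push_cast
      ring_nf
  · refine key_lemma lam mu rho omega β γs γp K (β ^ 2 / γp) (-1) (by norm_num) hr1 hr2 hB
      c1 c2 (Set.Ioi 0) isOpen_Ioi x hpos ?_ ?_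
    · intro y hy
      rw [hc1 y, abs_of_pos hy]
      push_cast
      ring_nf
    · intro y hy
      rw [hc2 y, abs_of_pos hy, Real.sign_of_pos hy]
      push_cast
      ring_nf
end

section
/- Let λ, μ, ρ > 0, ω > 0, and β ∈ ℝ with β² > ρω²/μ. Set γ_s := √(β² − ρω²/μ), γ_p := √(β² − ρω²/(λ+2μ)), and K := (λ+μ)/(4πμ(λ+2μ)(γ_p² − γ_s²)). Define c₁(x) := i K β·sgn(x)·( e^{−γ_s|x|} − e^{−γ_p|x|} ) and c₂(x) := K·( γ_p·e^{−γ_p|x|} − (β²/γ_s)·e^{−γ_s|x|} ). Then for every x ∈ ℝ with x ≠ 0: (ρω² − (λ+2μ)β²)·c₁(x) + μ·c₁''(x) + i(λ+μ)β·c₂'(x) = 0 and (ρω² − μβ²)·c₂(x) + (λ+2μ)·c₂''(x) + i(λ+μ)β·c₁'(x) = 0. -/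
private lemma hasDerivAt_aux (P Q r q : ℂ) (x : ℝ) :
    HasDerivAt (fun y : ℝ => P * Complex.exp (r * y) + Q * Complex.exp (q * y))
      (P * r * Complex.exp (r * x) + Q * q * Complex.exp (q * x)) x := by
  have h1 : HasDerivAt (fun y : ℝ => r * (y : ℂ)) r x := by
    simpa using (Complex.ofRealCLM.hasDerivAt (x := x)).const_mul r
  have h2 : HasDerivAt (fun y : ℝ => q * (y : ℂ)) q x := by
    simpa using (Complex.ofRealCLM.hasDerivAt (x := x)).const_mul q
  have h := ((h1.cexp).const_mul P).add ((h2.cexp).const_mul Q)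
  refine h.congr_deriv ?_
  ring

private lemma deriv_aux_pt (P Q r q : ℂ) (x : ℝ) :
    deriv (fun y : ℝ => P * Complex.exp (r * y) + Q * Complex.exp (q * y)) x
      = P * r * Complex.exp (r * x) + Q * q * Complex.exp (q * x) :=
  (hasDerivAt_aux P Q r q x).deriv

private lemma deriv_aux_fun (P Q r q : ℂ) :
    deriv (fun y : ℝ => P * Complex.exp (r * y) + Q * Complex.exp (q * y))
      = fun y : ℝ => P * r * Complex.exp (r * y) + Q * q * Complex.exp (q * y) :=
  funext fun x => deriv_aux_pt P Q r q x

/-- Case I (evanescent regime) solution of the coupled ODE system satisfied by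
the Fourier coefficients `(c_{l,12}, c_{l,22})` of the quasi-periodic Green's
function of the Lamé system, for `β² > ρω²/μ`. -/
theorem stmt11 (lam mu rho omega β : ℝ)
    (hlam : 0 < lam) (hmu : 0 < mu) (hrho : 0 < rho) (homega : 0 < omega)
    (hβ : rho * omega ^ 2 / mu < β ^ 2)
    (γs γp K : ℝ)
    (hγs : γs = Real.sqrt (β ^ 2 - rho * omega ^ 2 / mu))
    (hγp : γp = Real.sqrt (β ^ 2 - rho * omega ^ 2 / (lam + 2 * mu)))
    (hK : K = (lam + mu) / (4 * Real.pi * mu * (lam + 2 * mu) * (γp ^ 2 - γs ^ 2)))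
    (c1 c2 : ℝ → ℂ)
    (hc1 : ∀ x : ℝ, c1 x =
      Complex.I * K * β * (Real.sign x : ℝ) *
        ((Real.exp (-(γs * |x|)) : ℝ) - (Real.exp (-(γp * |x|)) : ℝ)))
    (hc2 : ∀ x : ℝ, c2 x =
      (K : ℂ) * ((γp : ℂ) * Real.exp (-(γp * |x|)) -
        ((β ^ 2 / γs : ℝ) : ℂ) * Real.exp (-(γs * |x|)))) :
    ∀ x : ℝ, x ≠ 0 →
      ((rho * omega ^ 2 - (lam + 2 * mu) * β ^ 2 : ℝ) : ℂ) * c1 x +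
          (mu : ℂ) * deriv (deriv c1) x +
          Complex.I * (lam + mu) * β * deriv c2 x = 0 ∧
      ((rho * omega ^ 2 - mu * β ^ 2 : ℝ) : ℂ) * c2 x +
          ((lam + 2 * mu : ℝ) : ℂ) * deriv (deriv c2) x +
          Complex.I * (lam + mu) * β * deriv c1 x = 0 := by
  intro x hx
  have hApos : 0 < rho * omega ^ 2 := by positivity
  have hM : (0:ℝ) < lam + 2 * mu := by linarith
  have hs_sq : γs ^ 2 = β ^ 2 - rho * omega ^ 2 / mu := by
    rw [hγs]; exact Real.sq_sqrt (by linarith)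
  have hdivle : rho * omega ^ 2 / (lam + 2 * mu) ≤ rho * omega ^ 2 / mu := by
    gcongr <;> linarith
  have hp_sq : γp ^ 2 = β ^ 2 - rho * omega ^ 2 / (lam + 2 * mu) := by
    rw [hγp]; exact Real.sq_sqrt (by linarith)
  have hγspos : 0 < γs := by
    rw [hγs]; exact Real.sqrt_pos.mpr (by linarith)
  have e1 : (mu:ℂ) * (γs:ℂ) ^ 2 = (mu:ℂ) * (β:ℂ) ^ 2 - (rho:ℂ) * (omega:ℂ) ^ 2 := by
    have h : mu * γs ^ 2 = mu * β ^ 2 - rho * omega ^ 2 := by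
      rw [hs_sq]; field_simp
    exact_mod_cast h
  have e2 : ((lam:ℂ) + 2 * (mu:ℂ)) * (γp:ℂ) ^ 2
      = ((lam:ℂ) + 2 * (mu:ℂ)) * (β:ℂ) ^ 2 - (rho:ℂ) * (omega:ℂ) ^ 2 := by
    have h : (lam + 2 * mu) * γp ^ 2 = (lam + 2 * mu) * β ^ 2 - rho * omega ^ 2 := by
      rw [hp_sq]; field_simp
    exact_mod_cast h
  have hB : (β:ℂ) ^ 2 / (γs:ℂ) * (γs:ℂ) = (β:ℂ) ^ 2 := by
    have h : β ^ 2 / γs * γs = β ^ 2 := div_mul_cancel₀ _ (ne_of_gt hγspos)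
    exact_mod_cast h
  have hI : Complex.I ^ 2 = -1 := Complex.I_sq
  rcases hx.lt_or_gt with hneg | hpos
  · -- x < 0
    have heqF : c1 =ᶠ[nhds x] (fun y : ℝ =>
        (-(Complex.I * K * β)) * Complex.exp ((γs:ℂ) * y)
          + (Complex.I * K * β) * Complex.exp ((γp:ℂ) * y)) := by
      filter_upwards [Iio_mem_nhds hneg] with y hy
      rw [hc1 y, Real.sign_of_neg hy, abs_of_neg hy,
        Complex.ofReal_exp, Complex.ofReal_exp,
        show ((-(γs * -y):ℝ):ℂ) = (γs:ℂ) * (y:ℂ) by push_cast; ring,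
        show ((-(γp * -y):ℝ):ℂ) = (γp:ℂ) * (y:ℂ) by push_cast; ring]
      push_cast
      ring
    have heqG : c2 =ᶠ[nhds x] (fun y : ℝ =>
        ((K:ℂ) * (γp:ℂ)) * Complex.exp ((γp:ℂ) * y)
          + (-((K:ℂ) * ((β ^ 2 / γs : ℝ):ℂ))) * Complex.exp ((γs:ℂ) * y)) := by
      filter_upwards [Iio_mem_nhds hneg] with y hy
      rw [hc2 y, abs_of_neg hy,
        Complex.ofReal_exp, Complex.ofReal_exp,
        show ((-(γs * -y):ℝ):ℂ) = (γs:ℂ) * (y:ℂ) by push_cast; ring,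
        show ((-(γp * -y):ℝ):ℂ) = (γp:ℂ) * (y:ℂ) by push_cast; ring]
      ring
    constructor
    · rw [heqF.eq_of_nhds, (heqF.deriv).deriv_eq, heqG.deriv_eq,
        deriv_aux_fun, deriv_aux_pt, deriv_aux_pt]
      push_cast
      linear_combination (-(Complex.I * (K:ℂ) * (β:ℂ) * Complex.exp ((γs:ℂ) * x))) * e1
        + (Complex.I * (K:ℂ) * (β:ℂ) * Complex.exp ((γp:ℂ) * x)) * e2
        - (Complex.I * ((lam:ℂ) + (mu:ℂ)) * (β:ℂ) * (K:ℂ) * Complex.exp ((γs:ℂ) * x)) * hB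
    · rw [heqG.eq_of_nhds, (heqG.deriv).deriv_eq, heqF.deriv_eq,
        deriv_aux_fun, deriv_aux_pt, deriv_aux_pt]
      push_cast
      linear_combination (((lam:ℂ) + (mu:ℂ)) * (K:ℂ) * (β:ℂ) ^ 2 *
            ((γp:ℂ) * Complex.exp ((γp:ℂ) * x) - (γs:ℂ) * Complex.exp ((γs:ℂ) * x))) * hI
        - ((K:ℂ) * ((β:ℂ) ^ 2 / (γs:ℂ)) * Complex.exp ((γs:ℂ) * x)) * e1
        + ((K:ℂ) * (γp:ℂ) * Complex.exp ((γp:ℂ) * x)) * e2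
        - (((lam:ℂ) + (mu:ℂ)) * (γs:ℂ) * (K:ℂ) * Complex.exp ((γs:ℂ) * x)) * hB
  · -- 0 < x
    have heqF : c1 =ᶠ[nhds x] (fun y : ℝ =>
        (Complex.I * K * β) * Complex.exp ((-(γs:ℂ)) * y)
          + (-(Complex.I * K * β)) * Complex.exp ((-(γp:ℂ)) * y)) := by
      filter_upwards [Ioi_mem_nhds hpos] with y hy
      rw [hc1 y, Real.sign_of_pos hy, abs_of_pos hy,
        Complex.ofReal_exp, Complex.ofReal_exp,
        show ((-(γs * y):ℝ):ℂ) = (-(γs:ℂ)) * (y:ℂ) by push_cast; ring,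
        show ((-(γp * y):ℝ):ℂ) = (-(γp:ℂ)) * (y:ℂ) by push_cast; ring]
      push_cast
      ring
    have heqG : c2 =ᶠ[nhds x] (fun y : ℝ =>
        ((K:ℂ) * (γp:ℂ)) * Complex.exp ((-(γp:ℂ)) * y)
          + (-((K:ℂ) * ((β ^ 2 / γs : ℝ):ℂ))) * Complex.exp ((-(γs:ℂ)) * y)) := by
      filter_upwards [Ioi_mem_nhds hpos] with y hy
      rw [hc2 y, abs_of_pos hy,
        Complex.ofReal_exp, Complex.ofReal_exp,
        show ((-(γs * y):ℝ):ℂ) = (-(γs:ℂ)) * (y:ℂ) by push_cast; ring,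
        show ((-(γp * y):ℝ):ℂ) = (-(γp:ℂ)) * (y:ℂ) by push_cast; ring]
      ring
    constructor
    · rw [heqF.eq_of_nhds, (heqF.deriv).deriv_eq, heqG.deriv_eq,
        deriv_aux_fun, deriv_aux_pt, deriv_aux_pt]
      push_cast
      linear_combination (Complex.I * (K:ℂ) * (β:ℂ) * Complex.exp ((-(γs:ℂ)) * x)) * e1
        - (Complex.I * (K:ℂ) * (β:ℂ) * Complex.exp ((-(γp:ℂ)) * x)) * e2
        + (Complex.I * ((lam:ℂ) + (mu:ℂ)) * (β:ℂ) * (K:ℂ) * Complex.exp ((-(γs:ℂ)) * x)) * hB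
    · rw [heqG.eq_of_nhds, (heqG.deriv).deriv_eq, heqF.deriv_eq,
        deriv_aux_fun, deriv_aux_pt, deriv_aux_pt]
      push_cast
      linear_combination (((lam:ℂ) + (mu:ℂ)) * (K:ℂ) * (β:ℂ) ^ 2 *
            ((γp:ℂ) * Complex.exp ((-(γp:ℂ)) * x) - (γs:ℂ) * Complex.exp ((-(γs:ℂ)) * x))) * hI
        - ((K:ℂ) * ((β:ℂ) ^ 2 / (γs:ℂ)) * Complex.exp ((-(γs:ℂ)) * x)) * e1
        + ((K:ℂ) * (γp:ℂ) * Complex.exp ((-(γp:ℂ)) * x)) * e2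
        - (((lam:ℂ) + (mu:ℂ)) * (γs:ℂ) * (K:ℂ) * Complex.exp ((-(γs:ℂ)) * x)) * hB
end

section
/- Let λ, μ, ρ > 0, ω > 0, and β ∈ ℝ with ρω²/(λ+2μ) < β² < ρω²/μ. Set γ_s := √(ρω²/μ − β²), γ_p := √(β² − ρω²/(λ+2μ)), and B := (λ+μ)/(4π(λ+2μ)μ(γ_s² + γ_p²)). Define c₁(x) := −B·( (β²/γ_p)·e^{−γ_p|x|} + i γ_s·e^{i γ_s|x|} ) and c₂(x) := −i β B·sgn(x)·( e^{−γ_p|x|} − e^{i γ_s|x|} ). Then for every x ∈ ℝ with x ≠ 0: (ρω² − (λ+2μ)β²)·c₁(x) + μ·c₁''(x) + i(λ+μ)β·c₂'(x) = 0 and (ρω² − μβ²)·c₂(x) + (λ+2μ)·c₂''(x) + i(λ+μ)β·c₁'(x) = 0. -/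
noncomputable def gg (A1 k1 A2 k2 : ℂ) : ℝ → ℂ := fun y =>
  A1 * Complex.exp (k1 * y) + A2 * Complex.exp (k2 * y)

lemma hasDerivAt_cexp_mul (k : ℂ) (x : ℝ) :
    HasDerivAt (fun y : ℝ => Complex.exp (k * y)) (k * Complex.exp (k * x)) x := by
  have h : HasDerivAt (fun w : ℂ => Complex.exp (k * w)) (Complex.exp (k * x) * k) x :=
    by simpa using (((hasDerivAt_id (x:ℂ)).const_mul k).cexp)
  simpa [mul_comm] using h.comp_ofReal

lemma gg_hasDerivAt (A1 k1 A2 k2 : ℂ) (x : ℝ) :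
    HasDerivAt (gg A1 k1 A2 k2) (gg (A1 * k1) k1 (A2 * k2) k2 x) x := by
  have h := ((hasDerivAt_cexp_mul k1 x).const_mul A1).add ((hasDerivAt_cexp_mul k2 x).const_mul A2)
  unfold gg
  simpa [gg, mul_assoc, Pi.add_def] using h

lemma gg_deriv (A1 k1 A2 k2 : ℂ) :
    deriv (gg A1 k1 A2 k2) = gg (A1 * k1) k1 (A2 * k2) k2 :=
  funext fun x => (gg_hasDerivAt A1 k1 A2 k2 x).deriv

lemma main_aux (lam mu rho omega β γs γp B : ℝ) (x : ℝ)
    (hγpC : (γp:ℂ) ≠ 0)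
    (hPC : ((lam:ℂ)+2*mu)*(γp:ℂ)^2 = ((lam:ℂ)+2*mu)*(β:ℂ)^2 - (rho:ℂ)*(omega:ℂ)^2)
    (hSC : (mu:ℂ)*(γs:ℂ)^2 = (rho:ℂ)*(omega:ℂ)^2 - (mu:ℂ)*(β:ℂ)^2)
    (c1 c2 : ℝ → ℂ) (σ : ℂ) (hσ : σ = 1 ∨ σ = -1)
    (h1 : c1 =ᶠ[nhds x] gg (-(B:ℂ) * ((β:ℂ)^2/(γp:ℂ))) (-(γp:ℂ)*σ)
      (-(B:ℂ)*Complex.I*(γs:ℂ)) (Complex.I*(γs:ℂ)*σ))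
    (h2 : c2 =ᶠ[nhds x] gg (-(Complex.I*(β:ℂ)*(B:ℂ)*σ)) (-(γp:ℂ)*σ)
      (Complex.I*(β:ℂ)*(B:ℂ)*σ) (Complex.I*(γs:ℂ)*σ)) :
    ((rho * omega ^ 2 - (lam + 2 * mu) * β ^ 2 : ℝ) : ℂ) * c1 x +
        (mu : ℂ) * deriv (deriv c1) x +
        Complex.I * (lam + mu) * β * deriv c2 x = 0 ∧
    ((rho * omega ^ 2 - mu * β ^ 2 : ℝ) : ℂ) * c2 x +
        ((lam + 2 * mu : ℝ) : ℂ) * deriv (deriv c2) x +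
        Complex.I * (lam + mu) * β * deriv c1 x = 0 := by
  have hq : (β:ℂ)^2/(γp:ℂ)*(γp:ℂ) = (β:ℂ)^2 := div_mul_cancel₀ _ hγpC
  rw [h1.eq_of_nhds, h2.eq_of_nhds, h1.deriv_eq, h2.deriv_eq,
    (h1.deriv).deriv_eq, (h2.deriv).deriv_eq, gg_deriv, gg_deriv, gg_deriv, gg_deriv]
  constructor
  · simp only [gg]
    push_cast
    rcases hσ with rfl | rfl
    · linear_combination (-(B:ℂ)*((β:ℂ)^2/(γp:ℂ))*Complex.exp (-(γp:ℂ)*1*(x:ℂ))) * hPC + (((lam:ℂ)+(mu:ℂ))*(B:ℂ)*(γp:ℂ)*Complex.exp (-(γp:ℂ)*1*(x:ℂ))) * hq + (Complex.I*(B:ℂ)*(γs:ℂ)*Complex.exp (Complex.I*(γs:ℂ)*1*(x:ℂ))) * hSC + (((lam:ℂ)+(mu:ℂ))*(β:ℂ)^2*(B:ℂ)*(γp:ℂ)*Complex.exp (-(γp:ℂ)*1*(x:ℂ)) + Complex.I*(γs:ℂ)*(B:ℂ)*Complex.exp (Complex.I*(γs:ℂ)*1*(x:ℂ))*(((lam:ℂ)+(mu:ℂ))*(β:ℂ)^2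 - (mu:ℂ)*(γs:ℂ)^2)) * Complex.I_sq
    · linear_combination (-(B:ℂ)*((β:ℂ)^2/(γp:ℂ))*Complex.exp (-(γp:ℂ)*(-1)*(x:ℂ))) * hPC + (((lam:ℂ)+(mu:ℂ))*(B:ℂ)*(γp:ℂ)*Complex.exp (-(γp:ℂ)*(-1)*(x:ℂ))) * hq + (Complex.I*(B:ℂ)*(γs:ℂ)*Complex.exp (Complex.I*(γs:ℂ)*(-1)*(x:ℂ))) * hSC + (((lam:ℂ)+(mu:ℂ))*(β:ℂ)^2*(B:ℂ)*(γp:ℂ)*Complex.exp (-(γp:ℂ)*(-1)*(x:ℂ)) + Complex.I*(γs:ℂ)*(B:ℂ)*Complex.exp (Complex.I*(γs:ℂ)*(-1)*(x:ℂ))*(((lam:ℂ)+(mu:ℂ))*(β:ℂ)^2 - (mu:ℂ)*(γs:ℂ)^2)) * Complex.I_sq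
  · simp only [gg]
    push_cast
    rcases hσ with rfl | rfl
    · linear_combination (-(Complex.I*(β:ℂ)*(B:ℂ))*Complex.exp (-(γp:ℂ)*1*(x:ℂ))) * hPC + (-(-(Complex.I*((lam:ℂ)+(mu:ℂ))*(β:ℂ)*(B:ℂ)))*Complex.exp (-(γp:ℂ)*1*(x:ℂ))) * hq + (-(Complex.I*(β:ℂ)*(B:ℂ))*Complex.exp (Complex.I*(γs:ℂ)*1*(x:ℂ))) * hSC + (((mu:ℂ)*(β:ℂ)*Complex.I*(B:ℂ)*(γs:ℂ)^2)*Complex.exp (Complex.I*(γs:ℂ)*1*(x:ℂ))) * Complex.I_sq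
    · linear_combination ((Complex.I*(β:ℂ)*(B:ℂ))*Complex.exp (-(γp:ℂ)*(-1)*(x:ℂ))) * hPC + ((-(Complex.I*((lam:ℂ)+(mu:ℂ))*(β:ℂ)*(B:ℂ)))*Complex.exp (-(γp:ℂ)*(-1)*(x:ℂ))) * hq + ((Complex.I*(β:ℂ)*(B:ℂ))*Complex.exp (Complex.I*(γs:ℂ)*(-1)*(x:ℂ))) * hSC + (-((mu:ℂ)*(β:ℂ)*Complex.I*(B:ℂ)*(γs:ℂ)^2)*Complex.exp (Complex.I*(γs:ℂ)*(-1)*(x:ℂ))) * Complex.I_sq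



/-- Case II (mixed regime) solution of the coupled ODE system satisfied by the
Fourier coefficients `(c_{l,11}, c_{l,21})` of the quasi-periodic Green's
function of the Lamé system, for `ρω²/(λ+2μ) < β² < ρω²/μ`: the P-wave part is
evanescent while the S-wave part propagates. -/
theorem stmt12 (lam mu rho omega β : ℝ)
    (hlam : 0 < lam) (hmu : 0 < mu) (hrho : 0 < rho) (homega : 0 < omega)
    (hβ1 : rho * omega ^ 2 / (lam + 2 * mu) < β ^ 2)
    (hβ2 : β ^ 2 < rho * omega ^ 2 / mu)
    (γs γp B : ℝ)
    (hγs : γs = Real.sqrt (rho * omega ^ 2 / mu - β ^ 2))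
    (hγp : γp = Real.sqrt (β ^ 2 - rho * omega ^ 2 / (lam + 2 * mu)))
    (hB : B = (lam + mu) / (4 * Real.pi * (lam + 2 * mu) * mu * (γs ^ 2 + γp ^ 2)))
    (c1 c2 : ℝ → ℂ)
    (hc1 : ∀ x : ℝ, c1 x =
      -(B : ℂ) * (((β ^ 2 / γp : ℝ) : ℂ) * Real.exp (-(γp * |x|)) +
        Complex.I * γs * Complex.exp (Complex.I * γs * |x|)))
    (hc2 : ∀ x : ℝ, c2 x =
      -(Complex.I * β * B * (Real.sign x : ℝ)) *
        ((Real.exp (-(γp * |x|)) : ℂ) - Complex.exp (Complex.I * γs * |x|))) :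
    ∀ x : ℝ, x ≠ 0 →
      ((rho * omega ^ 2 - (lam + 2 * mu) * β ^ 2 : ℝ) : ℂ) * c1 x +
          (mu : ℂ) * deriv (deriv c1) x +
          Complex.I * (lam + mu) * β * deriv c2 x = 0 ∧
      ((rho * omega ^ 2 - mu * β ^ 2 : ℝ) : ℂ) * c2 x +
          ((lam + 2 * mu : ℝ) : ℂ) * deriv (deriv c2) x +
          Complex.I * (lam + mu) * β * deriv c1 x = 0 := by
  intro x hx0
  have hL : (0:ℝ) < lam + 2 * mu := by linarith
  have hγp2 : γp ^ 2 = β ^ 2 - rho * omega ^ 2 / (lam + 2 * mu) := by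
    rw [hγp, sq, Real.mul_self_sqrt (by linarith)]
  have hγs2 : γs ^ 2 = rho * omega ^ 2 / mu - β ^ 2 := by
    rw [hγs, sq, Real.mul_self_sqrt (by linarith)]
  have hγppos : 0 < γp := by
    rw [hγp]; exact Real.sqrt_pos.mpr (by linarith)
  have hγpC : (γp:ℂ) ≠ 0 := by exact_mod_cast hγppos.ne'
  have hPreal : (lam + 2*mu) * γp ^ 2 = (lam + 2*mu) * β ^ 2 - rho * omega ^ 2 := by
    rw [hγp2]; field_simp
  have hSreal : mu * γs ^ 2 = rho * omega ^ 2 - mu * β ^ 2 := by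
    rw [hγs2]; field_simp
  have hPC : ((lam:ℂ)+2*mu)*(γp:ℂ)^2 = ((lam:ℂ)+2*mu)*(β:ℂ)^2 - (rho:ℂ)*(omega:ℂ)^2 := by
    exact_mod_cast congrArg Complex.ofReal hPreal
  have hSC : (mu:ℂ)*(γs:ℂ)^2 = (rho:ℂ)*(omega:ℂ)^2 - (mu:ℂ)*(β:ℂ)^2 := by
    exact_mod_cast congrArg Complex.ofReal hSreal
  rcases hx0.lt_or_gt with hx | hx
  · -- x < 0, σ = -1
    refine main_aux lam mu rho omega β γs γp B x hγpC hPC hSC c1 c2 (-1) (Or.inr rfl) ?_ ?_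
    · filter_upwards [isOpen_Iio.mem_nhds hx] with y hy
      rw [hc1 y]
      have hyabs : |y| = -y := abs_of_neg hy
      simp only [gg, hyabs, Complex.ofReal_exp]
      push_cast
      ring_nf
    · filter_upwards [isOpen_Iio.mem_nhds hx] with y hy
      rw [hc2 y]
      have hyabs : |y| = -y := abs_of_neg hy
      simp only [gg, hyabs, Complex.ofReal_exp, Real.sign_of_neg hy]
      push_cast
      ring_nf
  · -- x > 0, σ = 1
    refine main_aux lam mu rho omega β γs γp B x hγpC hPC hSC c1 c2 1 (Or.inl rfl) ?_ ?_
    · filter_upwards [isOpen_Ioi.mem_nhds hx] with y hy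
      rw [hc1 y]
      have hyabs : |y| = y := abs_of_pos hy
      simp only [gg, hyabs, Complex.ofReal_exp, Real.sign_of_pos hy]
      push_cast
      ring_nf
    · filter_upwards [isOpen_Ioi.mem_nhds hx] with y hy
      rw [hc2 y]
      have hyabs : |y| = y := abs_of_pos hy
      simp only [gg, hyabs, Complex.ofReal_exp, Real.sign_of_pos hy]
      push_cast
      ring_nf
end

section
/- Let λ, μ, ρ > 0, ω > 0, and β ∈ ℝ with β² < ρω²/(λ+2μ). Set γ_s := √(ρω²/μ − β²), γ_p := √(ρω²/(λ+2μ) − β²), and A := (λ+μ)/(4πμ(λ+2μ)(γ_p² − γ_s²)). Define c₁(x) := i A·( γ_s·e^{i γ_s|x|} + (β²/γ_p)·e^{i γ_p|x|} ) and c₂(x) := i A β·sgn(x)·( e^{i γ_p|x|} − e^{i γ_s|x|} ). Then for every x ∈ ℝ with x ≠ 0: (ρω² − (λ+2μ)β²)·c₁(x) + μ·c₁''(x) + i(λ+μ)β·c₂'(x) = 0 and (ρω² − μβ²)·c₂(x) + (λ+2μ)·c₂''(x) + i(λ+μ)β·c₁'(x) = 0. -/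
lemma hasDerivAt_cexp_linear (c : ℂ) (x : ℝ) :
    HasDerivAt (fun t : ℝ => Complex.exp (c * t)) (c * Complex.exp (c * x)) x := by
  have h := (((hasDerivAt_id (x:ℂ)).const_mul c).cexp).comp_ofReal
  simpa [mul_comm] using h

lemma aux13 (ro lam mu β s p q A ε : ℝ)
    (hs : mu * s ^ 2 = ro - mu * β ^ 2)
    (hp : (lam + 2 * mu) * p ^ 2 = ro - (lam + 2 * mu) * β ^ 2)
    (hq : q * p = β ^ 2)
    (hε : (ε : ℂ) ^ 2 = 1)
    (c1 c2 : ℝ → ℂ) (x : ℝ)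
    (h1 : ∀ᶠ t in nhds x, c1 t = Complex.I * A *
      ((s : ℂ) * Complex.exp (Complex.I * s * ε * t) +
       (q : ℂ) * Complex.exp (Complex.I * p * ε * t)))
    (h2 : ∀ᶠ t in nhds x, c2 t = Complex.I * A * β * ε *
      (Complex.exp (Complex.I * p * ε * t) - Complex.exp (Complex.I * s * ε * t))) :
    ((ro - (lam + 2 * mu) * β ^ 2 : ℝ) : ℂ) * c1 x +
        (mu : ℂ) * deriv (deriv c1) x +
        Complex.I * (lam + mu) * β * deriv c2 x = 0 ∧
    ((ro - mu * β ^ 2 : ℝ) : ℂ) * c2 x +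
        ((lam + 2 * mu : ℝ) : ℂ) * deriv (deriv c2) x +
        Complex.I * (lam + mu) * β * deriv c1 x = 0 := by
  set cs : ℂ := Complex.I * s * ε with hcs
  set cp : ℂ := Complex.I * p * ε with hcp
  set F1 : ℝ → ℂ := fun t => Complex.I * A *
      ((s : ℂ) * Complex.exp (cs * t) + (q : ℂ) * Complex.exp (cp * t)) with hF1def
  set F2 : ℝ → ℂ := fun t => Complex.I * A * β * ε *
      (Complex.exp (cp * t) - Complex.exp (cs * t)) with hF2def
  have e1 : c1 =ᶠ[nhds x] F1 := h1
  have e2 : c2 =ᶠ[nhds x] F2 := h2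
  -- first derivatives
  have hF1 : ∀ t : ℝ, HasDerivAt F1
      (Complex.I * A * ((s:ℂ) * (cs * Complex.exp (cs * t)) + (q:ℂ) * (cp * Complex.exp (cp * t)))) t :=
    fun t => (((hasDerivAt_cexp_linear cs t).const_mul (s:ℂ)).add
      ((hasDerivAt_cexp_linear cp t).const_mul (q:ℂ))).const_mul (Complex.I * A)
  have hF2 : ∀ t : ℝ, HasDerivAt F2
      (Complex.I * A * β * ε * (cp * Complex.exp (cp * t) - cs * Complex.exp (cs * t))) t :=
    fun t => ((hasDerivAt_cexp_linear cp t).sub (hasDerivAt_cexp_linear cs t)).const_mul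
      (Complex.I * A * β * ε)
  have hD1 : deriv F1 = fun t : ℝ => Complex.I * A *
      ((s:ℂ) * (cs * Complex.exp (cs * t)) + (q:ℂ) * (cp * Complex.exp (cp * t))) :=
    funext fun t => (hF1 t).deriv
  have hD2 : deriv F2 = fun t : ℝ => Complex.I * A * β * ε *
      (cp * Complex.exp (cp * t) - cs * Complex.exp (cs * t)) :=
    funext fun t => (hF2 t).deriv
  -- second derivatives
  have hDD1 : HasDerivAt (deriv F1)
      (Complex.I * A * ((s:ℂ) * (cs * (cs * Complex.exp (cs * x))) +
        (q:ℂ) * (cp * (cp * Complex.exp (cp * x))))) x := by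
    rw [hD1]
    exact ((((hasDerivAt_cexp_linear cs x).const_mul cs).const_mul (s:ℂ)).add
      (((hasDerivAt_cexp_linear cp x).const_mul cp).const_mul (q:ℂ))).const_mul (Complex.I * A)
  have hDD2 : HasDerivAt (deriv F2)
      (Complex.I * A * β * ε * (cp * (cp * Complex.exp (cp * x)) -
        cs * (cs * Complex.exp (cs * x)))) x := by
    rw [hD2]
    exact (((hasDerivAt_cexp_linear cp x).const_mul cp).sub
      ((hasDerivAt_cexp_linear cs x).const_mul cs)).const_mul (Complex.I * A * β * ε)
  -- transfer to c1, c2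
  have hc1x : c1 x = F1 x := e1.eq_of_nhds
  have hc2x : c2 x = F2 x := e2.eq_of_nhds
  have hd1 : deriv c1 x = Complex.I * A * ((s:ℂ) * (cs * Complex.exp (cs * x)) +
      (q:ℂ) * (cp * Complex.exp (cp * x))) := by
    rw [e1.deriv_eq, (hF1 x).deriv]
  have hd2 : deriv c2 x = Complex.I * A * β * ε *
      (cp * Complex.exp (cp * x) - cs * Complex.exp (cs * x)) := by
    rw [e2.deriv_eq, (hF2 x).deriv]
  have hdd1 : deriv (deriv c1) x = Complex.I * A * ((s:ℂ) * (cs * (cs * Complex.exp (cs * x))) +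
      (q:ℂ) * (cp * (cp * Complex.exp (cp * x)))) := by
    rw [e1.deriv.deriv_eq, hDD1.deriv]
  have hdd2 : deriv (deriv c2) x = Complex.I * A * β * ε *
      (cp * (cp * Complex.exp (cp * x)) - cs * (cs * Complex.exp (cs * x))) := by
    rw [e2.deriv.deriv_eq, hDD2.deriv]
  -- complex versions of the algebraic hypotheses
  have hsC : (mu : ℂ) * (s:ℂ) ^ 2 = (ro : ℂ) - (mu:ℂ) * (β:ℂ) ^ 2 := by exact_mod_cast congrArg (Complex.ofReal) hs
  have hpC : ((lam:ℂ) + 2 * mu) * (p:ℂ) ^ 2 = (ro:ℂ) - ((lam:ℂ) + 2 * mu) * (β:ℂ) ^ 2 := by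
    exact_mod_cast congrArg (Complex.ofReal) hp
  have hqC : (q:ℂ) * (p:ℂ) = (β:ℂ) ^ 2 := by exact_mod_cast congrArg (Complex.ofReal) hq
  set ES := Complex.exp (cs * x)
  set EP := Complex.exp (cp * x)
  -- nice forms using I^2 = -1 and ε^2 = 1
  have hd1' : deriv c1 x = -((A:ℂ) * ε) * ((s:ℂ)^2 * ES + (q:ℂ) * p * EP) := by
    rw [hd1, hcs, hcp]
    linear_combination ((A:ℂ) * ε * ((s:ℂ)^2 * ES + (q:ℂ) * p * EP)) * Complex.I_sq
  have hd2' : deriv c2 x = -((A:ℂ) * β) * ((p:ℂ) * EP - (s:ℂ) * ES) := by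
    rw [hd2, hcs, hcp]
    linear_combination ((A:ℂ) * β * (ε:ℂ)^2 * ((p:ℂ) * EP - (s:ℂ) * ES)) * Complex.I_sq +
      (-((A:ℂ) * β) * ((p:ℂ) * EP - (s:ℂ) * ES)) * hε
  have hdd1' : deriv (deriv c1) x = Complex.I * A * (-((s:ℂ)^3) * ES - (q:ℂ) * (p:ℂ)^2 * EP) := by
    rw [hdd1, hcs, hcp]
    linear_combination (Complex.I * (A:ℂ) * ((s:ℂ)^3 * ES + (q:ℂ) * (p:ℂ)^2 * EP) * (ε:ℂ)^2) * Complex.I_sq +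
      (-(Complex.I * (A:ℂ) * ((s:ℂ)^3 * ES + (q:ℂ) * (p:ℂ)^2 * EP))) * hε
  have hdd2' : deriv (deriv c2) x = Complex.I * A * β * ε * ((s:ℂ)^2 * ES - (p:ℂ)^2 * EP) := by
    rw [hdd2, hcs, hcp]
    linear_combination (Complex.I * (A:ℂ) * β * (ε:ℂ)^3 * ((p:ℂ)^2 * EP - (s:ℂ)^2 * ES)) * Complex.I_sq +
      (-(Complex.I * (A:ℂ) * β * ε * ((p:ℂ)^2 * EP - (s:ℂ)^2 * ES))) * hε
  have hc1x' : c1 x = Complex.I * A * ((s:ℂ) * ES + (q:ℂ) * EP) := e1.eq_of_nhds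
  have hc2x' : c2 x = Complex.I * A * β * ε * (EP - ES) := e2.eq_of_nhds
  constructor
  · rw [hc1x', hdd1', hd2']
    push_cast
    linear_combination (-(Complex.I * (A:ℂ) * s * ES)) * hsC +
      (-(Complex.I * (A:ℂ) * q * EP)) * hpC +
      ((Complex.I * (A:ℂ) * ((lam:ℂ) + mu) * p * EP)) * hqC
  · rw [hc2x', hdd2', hd1']
    push_cast
    linear_combination (Complex.I * (A:ℂ) * β * ε * ES) * hsC +
      (-(Complex.I * (A:ℂ) * β * ε * EP)) * hpC +
      (-(Complex.I * (A:ℂ) * ((lam:ℂ) + mu) * β * ε * EP)) * hqC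

/-- Case III (propagating regime) solution of the coupled ODE system satisfied
by the Fourier coefficients `(c_{l,11}, c_{l,21})` of the quasi-periodic
Green's function of the Lamé system, for `β² < ρω²/(λ+2μ)`: both the P-wave
and the S-wave parts propagate. -/
theorem stmt13 (lam mu rho omega β : ℝ)
    (hlam : 0 < lam) (hmu : 0 < mu) (hrho : 0 < rho) (homega : 0 < omega)
    (hβ : β ^ 2 < rho * omega ^ 2 / (lam + 2 * mu))
    (γs γp A : ℝ)
    (hγs : γs = Real.sqrt (rho * omega ^ 2 / mu - β ^ 2))
    (hγp : γp = Real.sqrt (rho * omega ^ 2 / (lam + 2 * mu) - β ^ 2))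
    (hA : A = (lam + mu) / (4 * Real.pi * mu * (lam + 2 * mu) * (γp ^ 2 - γs ^ 2)))
    (c1 c2 : ℝ → ℂ)
    (hc1 : ∀ x : ℝ, c1 x =
      Complex.I * A * ((γs : ℂ) * Complex.exp (Complex.I * γs * |x|) +
        ((β ^ 2 / γp : ℝ) : ℂ) * Complex.exp (Complex.I * γp * |x|)))
    (hc2 : ∀ x : ℝ, c2 x =
      Complex.I * A * β * (Real.sign x : ℝ) *
        (Complex.exp (Complex.I * γp * |x|) - Complex.exp (Complex.I * γs * |x|))) :
    ∀ x : ℝ, x ≠ 0 →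
      ((rho * omega ^ 2 - (lam + 2 * mu) * β ^ 2 : ℝ) : ℂ) * c1 x +
          (mu : ℂ) * deriv (deriv c1) x +
          Complex.I * (lam + mu) * β * deriv c2 x = 0 ∧
      ((rho * omega ^ 2 - mu * β ^ 2 : ℝ) : ℂ) * c2 x +
          ((lam + 2 * mu : ℝ) : ℂ) * deriv (deriv c2) x +
          Complex.I * (lam + mu) * β * deriv c1 x = 0 := by
  intro x hx
  have hL : 0 < lam + 2 * mu := by linarith
  have hppos : 0 < rho * omega ^ 2 / (lam + 2 * mu) - β ^ 2 := by linarith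
  have hro : 0 ≤ rho * omega ^ 2 := by positivity
  have hle : rho * omega ^ 2 / (lam + 2 * mu) ≤ rho * omega ^ 2 / mu :=
    div_le_div_of_nonneg_left hro hmu (by linarith)
  have hspos : 0 < rho * omega ^ 2 / mu - β ^ 2 := by linarith
  have hγp0 : 0 < γp := by rw [hγp]; exact Real.sqrt_pos.mpr hppos
  have hγp2 : γp ^ 2 = rho * omega ^ 2 / (lam + 2 * mu) - β ^ 2 := by
    rw [hγp, Real.sq_sqrt hppos.le]
  have hγs2 : γs ^ 2 = rho * omega ^ 2 / mu - β ^ 2 := by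
    rw [hγs, Real.sq_sqrt hspos.le]
  have hs : mu * γs ^ 2 = rho * omega ^ 2 - mu * β ^ 2 := by
    rw [hγs2]; field_simp
  have hp : (lam + 2 * mu) * γp ^ 2 = rho * omega ^ 2 - (lam + 2 * mu) * β ^ 2 := by
    rw [hγp2]; field_simp
  have hq : (β ^ 2 / γp) * γp = β ^ 2 := div_mul_cancel₀ _ hγp0.ne'
  rcases hx.lt_or_gt with hneg | hpos
  · -- x < 0 : ε = -1
    have hε : ((-1 : ℝ) : ℂ) ^ 2 = 1 := by norm_num
    have hev : ∀ᶠ t in nhds x, t < 0 := eventually_lt_nhds hneg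
    have h1 : ∀ᶠ t in nhds x, c1 t = Complex.I * A *
        ((γs : ℂ) * Complex.exp (Complex.I * γs * ((-1 : ℝ) : ℂ) * t) +
         ((β ^ 2 / γp : ℝ) : ℂ) * Complex.exp (Complex.I * γp * ((-1 : ℝ) : ℂ) * t)) := by
      filter_upwards [hev] with t ht
      rw [hc1 t, abs_of_neg ht]
      push_cast
      ring_nf
    have h2 : ∀ᶠ t in nhds x, c2 t = Complex.I * A * β * ((-1 : ℝ) : ℂ) *
        (Complex.exp (Complex.I * γp * ((-1 : ℝ) : ℂ) * t) -
         Complex.exp (Complex.I * γs * ((-1 : ℝ) : ℂ) * t)) := by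
      filter_upwards [hev] with t ht
      rw [hc2 t, abs_of_neg ht, Real.sign_of_neg ht]
      push_cast
      ring_nf
    exact aux13 (rho * omega ^ 2) lam mu β γs γp (β ^ 2 / γp) A (-1) hs hp hq hε c1 c2 x h1 h2
  · -- x > 0 : ε = 1
    have hε : ((1 : ℝ) : ℂ) ^ 2 = 1 := by norm_num
    have hev : ∀ᶠ t in nhds x, 0 < t := eventually_gt_nhds hpos
    have h1 : ∀ᶠ t in nhds x, c1 t = Complex.I * A *
        ((γs : ℂ) * Complex.exp (Complex.I * γs * ((1 : ℝ) : ℂ) * t) +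
         ((β ^ 2 / γp : ℝ) : ℂ) * Complex.exp (Complex.I * γp * ((1 : ℝ) : ℂ) * t)) := by
      filter_upwards [hev] with t ht
      rw [hc1 t, abs_of_pos ht]
      push_cast
      ring_nf
    have h2 : ∀ᶠ t in nhds x, c2 t = Complex.I * A * β * ((1 : ℝ) : ℂ) *
        (Complex.exp (Complex.I * γp * ((1 : ℝ) : ℂ) * t) -
         Complex.exp (Complex.I * γs * ((1 : ℝ) : ℂ) * t)) := by
      filter_upwards [hev] with t ht
      rw [hc2 t, abs_of_pos ht, Real.sign_of_pos ht]
      push_cast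
      ring_nf
    exact aux13 (rho * omega ^ 2) lam mu β γs γp (β ^ 2 / γp) A 1 hs hp hq hε c1 c2 x h1 h2
end
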